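/- arXiv:2405.05661 — 3 statements merged into one kernel-verified Lean document; each statement's English description precedes it below -/
import Mathlib

section
/- The quantity E = (1/2) Φ_0(φ) v_1² + (J/2) ω² is a first integral of the reduced system: Φ_0(φ) v̇_1 = b ω² + Φ_1(φ) v_1² + Φ_2(φ) ω v_1, J ω̇ = -b ω v_1, φ̇_i = (-1)^i (v_1/c_i) sin θ_i − ω, where Φ_0(φ) = m + ∑ μ_i sin²θ_i, Φ_1(φ) = ∑_i μ_i sin(2θ_i) [ sin θ_i/(2c_i) + ∑_{j<i} sin θ_j / c_j ], Φ_2(φ) = (1/2) ∑_i μ_i sin(2θ_i), and θ_i = (-1)^{i+1} φ_i + 2∑_{j<i} (-1)^{j+1} φ_j. -/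
open Real Finset

private lemma geom_neg_one_aux (i : ℕ) :
    ∑ j ∈ Finset.range i, (-1 : ℝ) ^ j = (1 - (-1 : ℝ) ^ i) / 2 := by
  induction i with
  | zero => simp
  | succ n ih => rw [Finset.sum_range_succ, ih, pow_succ]; ring

/-- The energy `E = (1/2)Φ₀(φ)v₁² + (J/2)ω²` is a first integral of the
reduced inertial system of the (N+1)-link wheeled vehicle:
`Φ₀(φ) v̇₁ = bω² + Φ₁(φ)v₁² + Φ₂(φ)ωv₁`, `Jω̇ = -bωv₁`,
`φ̇_i = (-1)^i (v₁/c_i) sin θ_i - ω` (indices written 0-based, so the paper's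
`(-1)^i` becomes `(-1)^{i+1}`). Along any solution, `dE/dt = 0`. -/
theorem stmt_4 (N : ℕ) (m J b : ℝ) (hm : 0 < m) (hJ : 0 < J) (hb : 0 < b)
    (c μ : ℕ → ℝ) (hc : ∀ i, 0 < c i)
    (v1 ω : ℝ → ℝ) (φ : ℕ → ℝ → ℝ) (dv : ℝ → ℝ)
    -- the angle combinations θ_i and the coefficients Φ₀, Φ₁, Φ₂:
    (θ : ℕ → ℝ → ℝ)
    (hθ : ∀ i t, θ i t = (-1 : ℝ) ^ i * φ i t
      + 2 * ∑ j ∈ Finset.range i, (-1 : ℝ) ^ j * φ j t)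
    (Φ0 Φ1 Φ2 : ℝ → ℝ)
    (hΦ0 : ∀ t, Φ0 t = m + ∑ i ∈ Finset.range N, μ i * (sin (θ i t)) ^ 2)
    (hΦ1 : ∀ t, Φ1 t = ∑ i ∈ Finset.range N, μ i * sin (2 * θ i t) *
      (sin (θ i t) / (2 * c i) + ∑ j ∈ Finset.range i, sin (θ j t) / c j))
    (hΦ2 : ∀ t, Φ2 t = (1 / 2) * ∑ i ∈ Finset.range N, μ i * sin (2 * θ i t))
    -- the equations of motion:
    (hv : ∀ t, HasDerivAt v1 (dv t) t)
    (hveq : ∀ t, Φ0 t * dv t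
      = b * (ω t) ^ 2 + Φ1 t * (v1 t) ^ 2 + Φ2 t * ω t * v1 t)
    (hω : ∀ t, HasDerivAt ω (-(b * ω t * v1 t) / J) t)
    (hφ : ∀ i, i < N → ∀ t, HasDerivAt (φ i)
      ((-1 : ℝ) ^ (i + 1) * (v1 t / c i) * sin (θ i t) - ω t) t) :
    ∀ t, HasDerivAt (fun s => Φ0 s / 2 * (v1 s) ^ 2 + J / 2 * (ω s) ^ 2) 0 t := by
  intro t
  have hJ' : (J : ℝ) ≠ 0 := hJ.ne'
  -- the derivative of θ i
  set dθ : ℕ → ℝ := fun i =>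
    -(ω t) - v1 t / c i * sin (θ i t)
      - 2 * (v1 t * ∑ j ∈ Finset.range i, sin (θ j t) / c j) with hdθ
  have hθder : ∀ i, i < N → HasDerivAt (θ i) (dθ i) t := by
    intro i hi
    have h1 : HasDerivAt (θ i)
        ((-1 : ℝ) ^ i * ((-1 : ℝ) ^ (i + 1) * (v1 t / c i) * sin (θ i t) - ω t)
          + 2 * ∑ j ∈ Finset.range i, (-1 : ℝ) ^ j *
            ((-1 : ℝ) ^ (j + 1) * (v1 t / c j) * sin (θ j t) - ω t)) t := by
      have hfun : θ i = fun s => (-1 : ℝ) ^ i * φ i s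
          + 2 * ∑ j ∈ Finset.range i, (-1 : ℝ) ^ j * φ j s := funext (hθ i)
      have h0 : HasDerivAt (fun s => (-1 : ℝ) ^ i * φ i s
          + 2 * ∑ j ∈ Finset.range i, (-1 : ℝ) ^ j * φ j s)
          ((-1 : ℝ) ^ i * ((-1 : ℝ) ^ (i + 1) * (v1 t / c i) * sin (θ i t) - ω t)
          + 2 * ∑ j ∈ Finset.range i, (-1 : ℝ) ^ j *
            ((-1 : ℝ) ^ (j + 1) * (v1 t / c j) * sin (θ j t) - ω t)) t :=
        ((hφ i hi t).const_mul _).add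
          ((HasDerivAt.fun_sum (fun j hj =>
            ((hφ j (lt_trans (Finset.mem_range.mp hj) hi) t).const_mul _))).const_mul 2)
      rw [← hfun] at h0
      exact h0
    have hsum : ∑ j ∈ Finset.range i, (-1 : ℝ) ^ j *
        ((-1 : ℝ) ^ (j + 1) * (v1 t / c j) * sin (θ j t) - ω t)
        = ∑ j ∈ Finset.range i,
            (-(v1 t / c j * sin (θ j t)) - (-1 : ℝ) ^ j * ω t) := by
      refine Finset.sum_congr rfl fun j _ => ?_
      have hpow : (-1 : ℝ) ^ j * (-1 : ℝ) ^ (j + 1) = -1 := by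
        rw [← pow_add]
        exact Odd.neg_one_pow ⟨j, by ring⟩
      linear_combination (v1 t / c j * sin (θ j t)) * hpow
    have hpow : (-1 : ℝ) ^ i * (-1 : ℝ) ^ (i + 1) = -1 := by
      rw [← pow_add]
      exact Odd.neg_one_pow ⟨i, by ring⟩
    have hmul : v1 t * ∑ j ∈ Finset.range i, sin (θ j t) / c j
        = ∑ j ∈ Finset.range i, v1 t / c j * sin (θ j t) := by
      rw [Finset.mul_sum]
      exact Finset.sum_congr rfl fun j _ => by ring
    convert h1 using 1
    rw [hsum, Finset.sum_sub_distrib, Finset.sum_neg_distrib, ← Finset.sum_mul,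
      geom_neg_one_aux, hdθ]
    simp only
    rw [hmul]
    linear_combination (-(v1 t / c i * sin (θ i t))) * hpow
  -- the derivative of Φ0
  have hΦ0der : HasDerivAt Φ0
      (∑ i ∈ Finset.range N, μ i * (2 * sin (θ i t) ^ 1 * (cos (θ i t) * dθ i))) t := by
    have hfun : Φ0 = fun s => m + ∑ i ∈ Finset.range N, μ i * (sin (θ i s)) ^ 2 :=
      funext hΦ0
    rw [hfun]
    refine (HasDerivAt.fun_sum fun i hi => ?_).const_add m
    exact ((((Real.hasDerivAt_sin (θ i t)).comp t
      (hθder i (Finset.mem_range.mp hi))).pow 2).const_mul (μ i))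
  -- the total energy derivative
  have hE : HasDerivAt (fun s => Φ0 s / 2 * (v1 s) ^ 2 + J / 2 * (ω s) ^ 2)
      ((∑ i ∈ Finset.range N, μ i * (2 * sin (θ i t) ^ 1 * (cos (θ i t) * dθ i))) / 2
          * v1 t ^ 2
        + Φ0 t / 2 * (2 * v1 t ^ 1 * dv t)
        + J / 2 * (2 * ω t ^ 1 * (-(b * ω t * v1 t) / J))) t :=
    ((hΦ0der.div_const 2).mul ((hv t).pow 2)).add (((hω t).pow 2).const_mul (J / 2))
  -- the key algebraic identity: Φ0' = -2 v1 Φ1 - 2 ω Φ2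
  have hkey : (∑ i ∈ Finset.range N, μ i * (2 * sin (θ i t) ^ 1 * (cos (θ i t) * dθ i)))
      = -2 * v1 t * Φ1 t - 2 * ω t * Φ2 t := by
    rw [hΦ1 t, hΦ2 t, Finset.mul_sum, Finset.mul_sum, Finset.mul_sum,
      ← Finset.sum_sub_distrib]
    refine Finset.sum_congr rfl fun i _ => ?_
    rw [Real.sin_two_mul, hdθ]
    simp only
    have hci : (c i : ℝ) ≠ 0 := (hc i).ne'
    field_simp
    ring
  rw [hkey] at hE
  have hJterm : J / 2 * (2 * ω t ^ 1 * (-(b * ω t * v1 t) / J))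
      = -(b * ω t ^ 2 * v1 t) := by
    field_simp
  rw [hJterm] at hE
  convert hE using 1
  have e1 := hveq t
  linear_combination -(v1 t) * e1
end

section
/- The system ϑ' = −(b/J) sin ϑ, φ_i' = ((-1)^i/c_i) cos ϑ sin θ_i − √(Φ_0(φ)/J) sin ϑ on the torus 𝕋^{N+1} has exactly 2^{N+1} fixed points, namely the points where sin ϑ = 0 and sin θ_i = 0 for all i (equivalently ϑ ∈ {0, π} and each φ_i ∈ {0, π}). -/
open Real Finset

/-- The system `ϑ' = -(b/J) sin ϑ`,
`φ_i' = ((-1)^i/c_i) cos ϑ sin θ_i - √(Φ₀(φ)/J) sin ϑ` on the torus `𝕋^{N+1}`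
(represented by the fundamental domain `[0, 2π)^{N+1}`) has exactly `2^{N+1}`
fixed points: the right-hand side vanishes iff `sin ϑ = 0` and `sin θ_i = 0`
for all `i`, the fixed points in the fundamental domain are exactly the points
with `ϑ ∈ {0, π}` and each `φ_i ∈ {0, π}`, and there are `2^{N+1}` of them.
(Indices are 0-based, so the paper's `(-1)^i` is written `(-1)^{i+1}`.) -/
theorem stmt_8 (N : ℕ) (b J m : ℝ) (hb : 0 < b) (hJ : 0 < J) (hm : 0 < m)
    (c μ : Fin N → ℝ) (hc : ∀ i, 0 < c i) (hμ : ∀ i, 0 ≤ μ i)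
    (θ : (Fin N → ℝ) → Fin N → ℝ)
    (hθ : ∀ φ i, θ φ i = (-1 : ℝ) ^ (i : ℕ) * φ i
      + 2 * ∑ j ∈ Finset.range i, (-1 : ℝ) ^ j *
        (if h : j < N then φ ⟨j, h⟩ else 0))
    (Φ0 : (Fin N → ℝ) → ℝ)
    (hΦ0 : ∀ φ, Φ0 φ = m + ∑ i, μ i * (sin (θ φ i)) ^ 2)
    -- the right-hand side of the system:
    (V : ℝ × (Fin N → ℝ) → ℝ × (Fin N → ℝ))
    (hV : ∀ ϑ φ, V (ϑ, φ) =
      (-(b / J) * sin ϑ,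
       fun i : Fin N => ((-1 : ℝ) ^ ((i : ℕ) + 1) / c i) * cos ϑ * sin (θ φ i)
         - Real.sqrt (Φ0 φ / J) * sin ϑ)) :
    -- fixed points are characterized by the vanishing of all the sines:
    (∀ ϑ φ, V (ϑ, φ) = 0 ↔ (sin ϑ = 0 ∧ ∀ i, sin (θ φ i) = 0)) ∧
    -- in the fundamental domain they are exactly the points with
    -- coordinates in {0, π}:
    ({p : ℝ × (Fin N → ℝ) | V p = 0 ∧ p.1 ∈ Set.Ico 0 (2 * π) ∧
        ∀ i, p.2 i ∈ Set.Ico 0 (2 * π)}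
      = {p : ℝ × (Fin N → ℝ) | (p.1 = 0 ∨ p.1 = π) ∧
          ∀ i, p.2 i = 0 ∨ p.2 i = π}) ∧
    -- and there are exactly 2^{N+1} of them:
    ({p : ℝ × (Fin N → ℝ) | V p = 0 ∧ p.1 ∈ Set.Ico 0 (2 * π) ∧
        ∀ i, p.2 i ∈ Set.Ico 0 (2 * π)}).ncard = 2 ^ (N + 1) := by
  have hπ := Real.pi_pos
  -- key pointwise lemma
  have key : ∀ φ : Fin N → ℝ, ∀ i : Fin N, (∀ j : Fin N, j < i → sin (φ j) = 0) →
      (sin (θ φ i) = 0 ↔ sin (φ i) = 0) := by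
    intro φ i hj
    have hsum : (∑ j ∈ Finset.range (i : ℕ), (-1 : ℝ) ^ j *
        (if h : j < N then φ ⟨j, h⟩ else 0)) ∈ AddSubgroup.zmultiples π := by
      refine AddSubgroup.sum_mem _ ?_
      intro j hjmem
      rw [Finset.mem_range] at hjmem
      have hjN : j < N := hjmem.trans i.isLt
      rw [dif_pos hjN]
      have hs : sin (φ ⟨j, hjN⟩) = 0 := hj ⟨j, hjN⟩ hjmem
      obtain ⟨n, hn⟩ := Real.sin_eq_zero_iff.1 hs
      refine AddSubgroup.mem_zmultiples_iff.2 ⟨(-1) ^ j * n, ?_⟩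
      rw [zsmul_eq_mul]
      push_cast
      rw [mul_assoc, hn]
    obtain ⟨K, hK⟩ := AddSubgroup.mem_zmultiples_iff.1 hsum
    rw [zsmul_eq_mul] at hK
    have hθi : θ φ i = (-1 : ℝ) ^ (i : ℕ) * φ i + (K : ℝ) * (2 * π) := by
      rw [hθ, ← hK]; ring
    rw [hθi, Real.sin_add_int_mul_two_pi]
    rcases Nat.even_or_odd (i : ℕ) with hpar | hpar
    · rw [hpar.neg_one_pow, one_mul]
    · rw [hpar.neg_one_pow, neg_one_mul, Real.sin_neg, neg_eq_zero]
  -- all θ-sines vanish iff all φ-sines vanish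
  have B : ∀ φ : Fin N → ℝ, (∀ i, sin (θ φ i) = 0) ↔ (∀ i, sin (φ i) = 0) := by
    intro φ
    constructor
    · intro h
      have H : ∀ n, ∀ hn : n < N, sin (φ ⟨n, hn⟩) = 0 := by
        intro n
        induction n using Nat.strong_induction_on with
        | _ n ih =>
          intro hn
          refine (key φ ⟨n, hn⟩ fun j hjlt => ?_).1 (h ⟨n, hn⟩)
          have := ih j.1 hjlt j.2
          simpa using this
      intro i
      have := H i.1 i.2
      simpa using this
    · intro h i
      exact (key φ i fun j _ => h j).2 (h i)
  -- characterization of fixed points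
  have char : ∀ ϑ φ, V (ϑ, φ) = 0 ↔ (sin ϑ = 0 ∧ ∀ i, sin (θ φ i) = 0) := by
    intro ϑ φ
    rw [hV]
    constructor
    · intro hz
      rw [Prod.ext_iff] at hz
      obtain ⟨h1, h2⟩ := hz
      simp only [Prod.fst_zero, Prod.snd_zero] at h1 h2
      have hbj : (b / J) ≠ 0 := by positivity
      have hsin : sin ϑ = 0 := by
        rcases mul_eq_zero.1 h1 with h | h
        · exact absurd h (by simpa using hbj)
        · exact h
      refine ⟨hsin, fun i => ?_⟩
      have h2i := congrFun h2 i
      simp only [Pi.zero_apply] at h2i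
      rw [hsin, mul_zero, sub_zero] at h2i
      have hcos : cos ϑ ≠ 0 := by
        intro hcz
        have := sin_sq_add_cos_sq ϑ
        rw [hsin, hcz] at this
        norm_num at this
      have hcoef : ((-1 : ℝ) ^ ((i : ℕ) + 1) / c i) ≠ 0 := by
        apply div_ne_zero
        · exact pow_ne_zero _ (by norm_num)
        · exact (hc i).ne'
      rcases mul_eq_zero.1 h2i with h | h
      · rcases mul_eq_zero.1 h with h' | h'
        · exact absurd h' hcoef
        · exact absurd h' hcos
      · exact h
    · rintro ⟨h1, h2⟩
      rw [Prod.ext_iff]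
      refine ⟨by simp [h1], ?_⟩
      funext i
      simp [h1, h2 i]
  -- sin x = 0 on [0, 2π) iff x ∈ {0, π}
  have sinIco : ∀ x : ℝ, x ∈ Set.Ico 0 (2 * π) → (sin x = 0 ↔ (x = 0 ∨ x = π)) := by
    intro x hx
    constructor
    · intro hs
      obtain ⟨n, hn⟩ := Real.sin_eq_zero_iff.1 hs
      have h0 : (0 : ℝ) ≤ (n : ℝ) * π := hn ▸ hx.1
      have h2 : (n : ℝ) * π < 2 * π := hn ▸ hx.2
      have hn0 : (0 : ℝ) ≤ (n : ℝ) := by nlinarith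
      have hn2 : (n : ℝ) < 2 := by nlinarith
      have hn0' : (0 : ℤ) ≤ n := by exact_mod_cast hn0
      have hn2' : n < 2 := by exact_mod_cast hn2
      interval_cases n
      · left; rw [← hn]; norm_num
      · right; rw [← hn]; norm_num
    · rintro (rfl | rfl) <;> simp
  -- the set equality
  have setEq : {p : ℝ × (Fin N → ℝ) | V p = 0 ∧ p.1 ∈ Set.Ico 0 (2 * π) ∧
        ∀ i, p.2 i ∈ Set.Ico 0 (2 * π)}
      = {p : ℝ × (Fin N → ℝ) | (p.1 = 0 ∨ p.1 = π) ∧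
          ∀ i, p.2 i = 0 ∨ p.2 i = π} := by
    ext ⟨ϑ, φ⟩
    simp only [Set.mem_setOf_eq]
    constructor
    · rintro ⟨hv, hϑ, hφ⟩
      obtain ⟨h1, h2⟩ := (char ϑ φ).1 hv
      have h2' := (B φ).1 h2
      exact ⟨(sinIco ϑ hϑ).1 h1, fun i => (sinIco _ (hφ i)).1 (h2' i)⟩
    · rintro ⟨hϑ, hφ⟩
      have memIco : ∀ x : ℝ, (x = 0 ∨ x = π) → x ∈ Set.Ico 0 (2 * π) := by
        rintro x (rfl | rfl) <;> constructor <;> nlinarith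
      have hsφ : ∀ i, sin (φ i) = 0 := by
        intro i; rcases hφ i with h | h <;> simp [h]
      have hsϑ : sin ϑ = 0 := by rcases hϑ with h | h <;> simp [h]
      exact ⟨(char ϑ φ).2 ⟨hsϑ, (B φ).2 hsφ⟩, memIco _ hϑ, fun i => memIco _ (hφ i)⟩
  refine ⟨char, setEq, ?_⟩
  rw [setEq]
  have hfin : {p : ℝ × (Fin N → ℝ) | (p.1 = 0 ∨ p.1 = π) ∧
        ∀ i, p.2 i = 0 ∨ p.2 i = π}
      = ↑(({0, π} : Finset ℝ) ×ˢ
          Fintype.piFinset fun _ : Fin N => ({0, π} : Finset ℝ)) := by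
    ext ⟨ϑ, φ⟩
    simp [Fintype.mem_piFinset]
  rw [hfin, Set.ncard_coe_finset, Finset.card_product, Fintype.card_piFinset]
  have hcard : ({0, π} : Finset ℝ).card = 2 := by
    rw [Finset.card_insert_of_notMem (by simp [Real.pi_ne_zero.symm, Ne.symm Real.pi_ne_zero])]
    rfl
  simp only [hcard, Finset.prod_const, Finset.card_univ, Fintype.card_fin]
  rw [pow_succ]
  ring
end

section
/- The vector fields σ_v and σ_ω on ℝ² × 𝕋^{N+1} defined by σ_ω = ∂/∂ψ − ∑_{i=1}^N ∂/∂φ_i and σ_v = cos ψ ∂/∂x + sin ψ ∂/∂y + ∑_{i=1}^N ((-1)^i/c_i) sin θ_i ∂/∂φ_i satisfy the commutation relation [σ_v, σ_ω] = −ν_v, where ν_v = −sin ψ ∂/∂x + cos ψ ∂/∂y − ∑_{i=1}^N ((-1)^i/c_i) cos θ_i ∂/∂φ_i. -/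
set_option maxHeartbeats 1000000

open Real Finset

lemma key_sum (n : ℕ) : (-1 : ℝ) ^ n + 2 * ∑ j ∈ Finset.range n, (-1 : ℝ) ^ j = 1 := by
  induction n with
  | zero => simp
  | succ n ih =>
    rw [Finset.sum_range_succ, pow_succ]
    ring_nf
    ring_nf at ih
    linarith

/-- The vector fields `σ_v` and `σ_ω` on `ℝ² × 𝕋^{N+1}` (with coordinates
`((x, y), (ψ, φ))`) defined by `σ_ω = ∂/∂ψ - ∑_i ∂/∂φ_i` and
`σ_v = cos ψ ∂/∂x + sin ψ ∂/∂y + ∑_i ((-1)^i/c_i) sin θ_i ∂/∂φ_i`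
satisfy the commutation relation `[σ_v, σ_ω] = -ν_v`, where
`ν_v = -sin ψ ∂/∂x + cos ψ ∂/∂y - ∑_i ((-1)^i/c_i) cos θ_i ∂/∂φ_i`.
The Lie bracket of vector fields `X, Y : E → E` is computed as
`[X, Y](p) = DY(p)[X(p)] - DX(p)[Y(p)]`.
(Indices are 0-based, so the paper's `(-1)^i` is written `(-1)^{i+1}`.) -/
theorem stmt_12 (N : ℕ) (c : Fin N → ℝ) (hc : ∀ i, 0 < c i)
    (θ : (Fin N → ℝ) → Fin N → ℝ)
    (hθ : ∀ φ i, θ φ i = (-1 : ℝ) ^ (i : ℕ) * φ i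
      + 2 * ∑ j ∈ Finset.range i, (-1 : ℝ) ^ j *
        (if h : j < N then φ ⟨j, h⟩ else 0))
    (σv σω νv : (ℝ × ℝ) × ℝ × (Fin N → ℝ) → (ℝ × ℝ) × ℝ × (Fin N → ℝ))
    (hσω : ∀ p, σω p = ((0, 0), (1, fun _ : Fin N => (-1 : ℝ))))
    (hσv : ∀ p, σv p = ((cos p.2.1, sin p.2.1),
      (0, fun i : Fin N =>
        ((-1 : ℝ) ^ ((i : ℕ) + 1) / c i) * sin (θ p.2.2 i))))
    (hνv : ∀ p, νv p = ((-sin p.2.1, cos p.2.1),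
      (0, fun i : Fin N =>
        -(((-1 : ℝ) ^ ((i : ℕ) + 1) / c i) * cos (θ p.2.2 i))))) :
    ∀ p, (fderiv ℝ σω p) (σv p) - (fderiv ℝ σv p) (σω p) = -(νv p) := by
  classical
  intro p
  have hσv' : σv = fun q : (ℝ × ℝ) × ℝ × (Fin N → ℝ) => ((cos q.2.1, sin q.2.1),
      ((0 : ℝ), fun i : Fin N => ((-1 : ℝ) ^ ((i : ℕ) + 1) / c i) * sin (θ q.2.2 i))) :=
    funext hσv
  have hσω' : σω = fun _ : (ℝ × ℝ) × ℝ × (Fin N → ℝ) =>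
      (((0 : ℝ), (0 : ℝ)), ((1 : ℝ), fun _ : Fin N => (-1 : ℝ))) := funext hσω
  -- linear maps
  set ψL : ((ℝ × ℝ) × ℝ × (Fin N → ℝ)) →L[ℝ] ℝ :=
    (ContinuousLinearMap.fst ℝ ℝ (Fin N → ℝ)).comp
      (ContinuousLinearMap.snd ℝ (ℝ × ℝ) (ℝ × (Fin N → ℝ))) with hpsiL
  set φL : ((ℝ × ℝ) × ℝ × (Fin N → ℝ)) →L[ℝ] (Fin N → ℝ) :=
    (ContinuousLinearMap.snd ℝ ℝ (Fin N → ℝ)).comp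
      (ContinuousLinearMap.snd ℝ (ℝ × ℝ) (ℝ × (Fin N → ℝ))) with hphiL
  set ΘL : Fin N → (((ℝ × ℝ) × ℝ × (Fin N → ℝ)) →L[ℝ] ℝ) := fun i =>
    ((-1 : ℝ) ^ (i : ℕ)) • ((ContinuousLinearMap.proj i).comp φL)
      + ∑ j ∈ Finset.range (i : ℕ), ((2 : ℝ) * (-1) ^ j) •
          (if h : j < N then (ContinuousLinearMap.proj (⟨j, h⟩ : Fin N)).comp φL else 0)
    with hThL
  have hval : ∀ (q : (ℝ × ℝ) × ℝ × (Fin N → ℝ)) (i : Fin N), ΘL i q = θ q.2.2 i := by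
    intro q i
    rw [hθ]
    simp only [hThL, hphiL, ContinuousLinearMap.add_apply, ContinuousLinearMap.smul_apply,
      ContinuousLinearMap.coe_comp', Function.comp_apply, ContinuousLinearMap.coe_snd',
      ContinuousLinearMap.proj_apply, ContinuousLinearMap.sum_apply, smul_eq_mul,
      Finset.mul_sum]
    congr 1
    refine Finset.sum_congr rfl fun j hj => ?_
    by_cases h : j < N
    · simp only [h, dif_pos]
      simp
      ring
    · simp [h]
  have hderΘ : ∀ i, HasFDerivAt (fun q : (ℝ × ℝ) × ℝ × (Fin N → ℝ) => θ q.2.2 i) (ΘL i) p := by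
    intro i
    have h : (fun q : (ℝ × ℝ) × ℝ × (Fin N → ℝ) => θ q.2.2 i) = fun q => ΘL i q := by
      funext q; rw [hval]
    rw [h]
    exact (ΘL i).hasFDerivAt
  have hψ : HasFDerivAt (fun q : (ℝ × ℝ) × ℝ × (Fin N → ℝ) => q.2.1) ψL p := ψL.hasFDerivAt
  have hD : HasFDerivAt σv
      ((((-sin p.2.1) • ψL).prod ((cos p.2.1) • ψL)).prod
        ((0 : ((ℝ × ℝ) × ℝ × (Fin N → ℝ)) →L[ℝ] ℝ).prod (ContinuousLinearMap.pi fun i =>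
          (((-1 : ℝ) ^ ((i : ℕ) + 1) / c i) * cos (θ p.2.2 i)) • ΘL i))) p := by
    rw [hσv']
    refine HasFDerivAt.prodMk (HasFDerivAt.prodMk ?_ ?_)
      (HasFDerivAt.prodMk (hasFDerivAt_const _ _) ?_)
    · exact hψ.cos
    · exact hψ.sin
    · refine hasFDerivAt_pi.mpr fun i => ?_
      have h := ((hderΘ i).sin).const_mul ((-1 : ℝ) ^ ((i : ℕ) + 1) / c i)
      rw [← smul_smul]
      exact h
  rw [hσω', fderiv_fun_const, hD.fderiv, hνv]
  have hΘv : ∀ i : Fin N,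
      ΘL i ((0 : ℝ × ℝ), ((1 : ℝ), fun _ : Fin N => (-1 : ℝ))) = -1 := by
    intro i
    rw [hval ((0 : ℝ × ℝ), ((1 : ℝ), fun _ : Fin N => (-1 : ℝ))) i, hθ]
    have h1 : ∀ j ∈ Finset.range (i : ℕ),
        (-1 : ℝ) ^ j * (if h : j < N then (fun _ : Fin N => (-1 : ℝ)) ⟨j, h⟩ else 0)
          = -(-1 : ℝ) ^ j := by
      intro j hj
      have : j < N := lt_trans (Finset.mem_range.mp hj) i.isLt
      simp [this]
    rw [Finset.sum_congr rfl h1]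
    have hk := key_sum (i : ℕ)
    simp only [Finset.sum_neg_distrib] at *
    linarith
  ext <;> simp [hΘv, hpsiL, Prod.mk_zero_zero] <;> ring
end
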